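/- arXiv:2605.02731 — 4 statements merged into one kernel-verified Lean document; each statement's English description precedes it below -/
import Mathlib

section
/- Let G be a 2-connected graph in which the set of degree-2 vertices is independent, and let H be obtained from G by suppressing all degree-2 vertices (replacing each path through a degree-2 vertex by a single edge). If H is a simple 3-connected graph, then G is essentially 3-connected, i.e., G has no vertex cut S with |S| ≤ 2 such that G − S has at least two components each with at least two vertices. -/
open SimpleGraph

/-- The graph obtained from `G` by deleting the vertices of `S`
(the vertices of `S` stay present but become isolated). -/
def deleteVerts {V : Type*} (G : SimpleGraph V) (S : Set V) : SimpleGraph V :=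
  SimpleGraph.fromRel fun a b => G.Adj a b ∧ a ∉ S ∧ b ∉ S

/-- `G` is 3-connected. -/
def ThreeConnected {V : Type*} [Fintype V] (G : SimpleGraph V) : Prop :=
  4 ≤ Fintype.card V ∧
    ∀ S : Set V, S.ncard ≤ 2 →
      ∀ a b : V, a ∉ S → b ∉ S → (deleteVerts G S).Reachable a b

/-- `G` is essentially 3-connected: `G` is connected and has no vertex cut `S` with
`|S| ≤ 2` such that `G − S` has two distinct components with at least two
vertices each. -/
def EssentiallyThreeConnected {V : Type*} (G : SimpleGraph V) : Prop :=
  G.Connected ∧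
    ∀ S : Set V, S.ncard ≤ 2 →
      ∀ a a' b b' : V, a ≠ a' → b ≠ b' →
        (deleteVerts G S).Reachable a a' → (deleteVerts G S).Reachable b b' →
        (deleteVerts G S).Reachable a b

/-- The graph obtained from `G` by suppressing all degree-2 vertices: its vertices are
the vertices of `G` of degree `≠ 2`, and two of them are adjacent if they are adjacent
in `G` or joined in `G` by a path of length two through a degree-2 vertex. -/
def suppressed {V : Type*} [Fintype V] (G : SimpleGraph V) [DecidableRel G.Adj] :
    SimpleGraph {v : V // G.degree v ≠ 2} :=
  SimpleGraph.fromRel fun a b =>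
    G.Adj a.1 b.1 ∨ ∃ w : V, G.degree w = 2 ∧ G.Adj a.1 w ∧ G.Adj w b.1

/-- `G` is 2-connected. -/
def TwoConnected {V : Type*} [Fintype V] (G : SimpleGraph V) : Prop :=
  3 ≤ Fintype.card V ∧
    ∀ v a b : V, a ≠ v → b ≠ v → (deleteVerts G {v}).Reachable a b

lemma dv_adj {V : Type*} {G : SimpleGraph V} {S : Set V} {a b : V} :
    (deleteVerts G S).Adj a b ↔ G.Adj a b ∧ a ∉ S ∧ b ∉ S := by
  rw [deleteVerts, SimpleGraph.fromRel_adj]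
  constructor
  · rintro ⟨hne, ⟨h, ha, hb⟩ | ⟨h, hb, ha⟩⟩
    exacts [⟨h, ha, hb⟩, ⟨h.symm, ha, hb⟩]
  · rintro ⟨h, ha, hb⟩
    exact ⟨h.ne, Or.inl ⟨h, ha, hb⟩⟩

lemma dv_le {V : Type*} (G : SimpleGraph V) (S : Set V) : deleteVerts G S ≤ G :=
  fun _ _ h => (dv_adj.mp h).1

lemma supp_adj {V : Type*} [Fintype V] {G : SimpleGraph V} [DecidableRel G.Adj]
    {a b : {v : V // G.degree v ≠ 2}} :
    (suppressed G).Adj a b ↔ a ≠ b ∧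
      (G.Adj a.1 b.1 ∨ ∃ w : V, G.degree w = 2 ∧ G.Adj a.1 w ∧ G.Adj w b.1) := by
  rw [suppressed, SimpleGraph.fromRel_adj]
  constructor
  · rintro ⟨hne, (h | ⟨w, hw, h1, h2⟩) | (h | ⟨w, hw, h1, h2⟩)⟩
    exacts [⟨hne, Or.inl h⟩, ⟨hne, Or.inr ⟨w, hw, h1, h2⟩⟩,
      ⟨hne, Or.inl h.symm⟩, ⟨hne, Or.inr ⟨w, hw, h2.symm, h1.symm⟩⟩]
  · rintro ⟨hne, h⟩
    exact ⟨hne, Or.inl h⟩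

lemma deg2_mem {V : Type*} [Fintype V] [DecidableEq V] {G : SimpleGraph V} [DecidableRel G.Adj]
    {w x y z : V} (hw : G.degree w = 2) (hx : G.Adj w x) (hy : G.Adj w y) (hz : G.Adj w z)
    (hxy : x ≠ y) : z = x ∨ z = y := by
  have hsub : ({x, y} : Finset V) ⊆ G.neighborFinset w := by
    intro t ht
    simp only [Finset.mem_insert, Finset.mem_singleton] at ht
    rcases ht with rfl | rfl <;> simp [SimpleGraph.mem_neighborFinset, hx, hy]
  have hcard : (G.neighborFinset w).card = 2 := by
    rw [SimpleGraph.card_neighborFinset_eq_degree, hw]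
  have : G.neighborFinset w = {x, y} := by
    apply (Finset.eq_of_subset_of_card_le hsub ?_).symm
    rw [hcard, Finset.card_insert_of_notMem (by simpa using hxy), Finset.card_singleton]
  have hzm : z ∈ G.neighborFinset w := by simpa [SimpleGraph.mem_neighborFinset] using hz
  rw [this] at hzm
  simpa using hzm

lemma deg2_other {V : Type*} [Fintype V] [DecidableEq V] {G : SimpleGraph V} [DecidableRel G.Adj]
    {w x : V} (hw : G.degree w = 2) (hx : G.Adj w x) : ∃ m, G.Adj w m ∧ m ≠ x := by
  have hcard : (G.neighborFinset w).card = 2 := by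
    rw [SimpleGraph.card_neighborFinset_eq_degree, hw]
  obtain ⟨m, hm, hmx⟩ := Finset.exists_mem_ne (s := G.neighborFinset w)
    (by rw [hcard]; norm_num) x
  exact ⟨m, by simpa [SimpleGraph.mem_neighborFinset] using hm, hmx⟩

lemma first_edge {V : Type*} {G : SimpleGraph V} {S : Set V} {a a' : V}
    (h : (deleteVerts G S).Reachable a a') (hne : a ≠ a') :
    ∃ z, G.Adj a z ∧ a ∉ S ∧ z ∉ S ∧ (deleteVerts G S).Reachable a z := by
  obtain ⟨w⟩ := h
  cases w with
  | nil => exact absurd rfl hne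
  | cons h p =>
    rename_i z
    obtain ⟨hadj, haS, hzS⟩ := dv_adj.mp h
    exact ⟨z, hadj, haS, hzS, SimpleGraph.Adj.reachable h⟩

lemma not_small_nbhd {W : Type*} [Fintype W] {H : SimpleGraph W} (h3 : ThreeConnected H)
    (x : W) (D : Set W) (hD : D.ncard ≤ 2) (hx : x ∉ D) (hnb : ∀ y, H.Adj x y → y ∈ D) :
    False := by
  have hne : (D ∪ {x} : Set W) ≠ Set.univ := by
    intro h
    have h4 := h3.1
    have huniv : (Set.univ : Set W).ncard = Fintype.card W := by simp [Set.ncard_univ]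
    have hle : (D ∪ {x} : Set W).ncard ≤ 3 := by
      calc (D ∪ {x} : Set W).ncard ≤ D.ncard + ({x} : Set W).ncard := Set.ncard_union_le _ _
        _ ≤ 3 := by simp [Set.ncard_singleton]; omega
    rw [h, huniv] at hle
    omega
  obtain ⟨y, hy⟩ := Set.ne_univ_iff_exists_notMem _ |>.mp hne
  simp only [Set.mem_union, Set.mem_singleton_iff, not_or] at hy
  obtain ⟨w⟩ := h3.2 D hD x y hx hy.1
  cases w with
  | nil => exact hy.2 rfl
  | cons h p =>
    obtain ⟨hadj, -, hzS⟩ := dv_adj.mp h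
    exact hzS (hnb _ hadj)

lemma star_case {V : Type*} [Fintype V] [DecidableEq V] {G : SimpleGraph V} [DecidableRel G.Adj]
    (hind : ∀ u v : V, G.degree u = 2 → G.degree v = 2 → ¬ G.Adj u v)
    (h3 : ThreeConnected (suppressed G))
    {S : Set V} (hS : S.ncard ≤ 2)
    {a a' : V} (haa' : (deleteVerts G S).Reachable a a') (hne : a ≠ a')
    {ah : V} (hahd : G.degree ah ≠ 2) (hahS : ah ∉ S) (hahr : (deleteVerts G S).Reachable a ah)
    (huniq : ∀ x, G.degree x ≠ 2 → x ∉ S → (deleteVerts G S).Reachable a x → x = ah)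
    {bh : V} (hbhd : G.degree bh ≠ 2) (hab : ah ≠ bh)
    (hfail : ∃ s ∈ S, G.degree s = 2 ∧ ∀ n, G.Adj s n → n = ah ∨ n = bh) : False := by
  obtain ⟨z, hz, haS, hzS, har⟩ := first_edge haa' hne
  -- find a degree-2 leaf l adjacent to ah
  have hleaf : ∃ l, G.degree l = 2 ∧ l ∉ S ∧ (deleteVerts G S).Reachable a l ∧ G.Adj ah l := by
    by_cases hda : G.degree a = 2
    · have hdz : G.degree z ≠ 2 := fun h => hind a z hda h hz
      have hzah : z = ah := huniq z hdz hzS har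
      exact ⟨a, hda, haS, SimpleGraph.Reachable.refl _, hzah ▸ hz.symm⟩
    · have haah : a = ah := huniq a hda haS (SimpleGraph.Reachable.refl _)
      by_cases hdz : G.degree z = 2
      · exact ⟨z, hdz, hzS, har, haah ▸ hz⟩
      · exact absurd (huniq z hdz hzS har ▸ haah) hz.ne
  obtain ⟨l, hl2, hlS, hlr, hadjl⟩ := hleaf
  -- the other neighbor m of l lies in S and has degree ≠ 2
  obtain ⟨m, hlm, hmah⟩ := deg2_other hl2 hadjl.symm
  have hdm : G.degree m ≠ 2 := fun h => hind l m hl2 h hlm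
  have hmS : m ∈ S := by
    by_contra hmS
    exact hmah (huniq m hdm hmS (hlr.trans (SimpleGraph.Adj.reachable (dv_adj.mpr ⟨hlm, hlS, hmS⟩))))
  obtain ⟨s, hsS, hs2, hsnb⟩ := hfail
  have hms : m ≠ s := fun h => hdm (h ▸ hs2)
  have hSeq : S = {s, m} := by
    refine (Set.eq_of_subset_of_ncard_le ?_ ?_ (Set.toFinite S)).symm
    · intro t ht
      simp only [Set.mem_insert_iff, Set.mem_singleton_iff] at ht
      rcases ht with rfl | rfl <;> assumption
    · rw [Set.ncard_pair (Ne.symm hms)] at *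
      exact hS
  -- neighbors of ah in the suppressed graph lie in {m, bh}
  have hahm : ah ≠ m := fun h => hahS (h ▸ hmS)
  refine not_small_nbhd h3 ⟨ah, hahd⟩ {⟨m, hdm⟩, ⟨bh, hbhd⟩} ?_ ?_ ?_
  · exact (Set.ncard_insert_le _ _).trans (by simp)
  · simp only [Set.mem_insert_iff, Set.mem_singleton_iff, Subtype.mk.injEq, not_or]
    exact ⟨hahm, hab⟩
  · rintro ⟨y, hyd⟩ hy
    obtain ⟨hne', hcase⟩ := supp_adj.mp hy
    have hyah : y ≠ ah := fun h => hne' (Subtype.ext h).symm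
    simp only [Set.mem_insert_iff, Set.mem_singleton_iff, Subtype.mk.injEq]
    rcases hcase with hd | ⟨w, hw2, h1, h2⟩
    · by_cases hyS : y ∈ S
      · left
        rw [hSeq] at hyS
        simp only [Set.mem_insert_iff, Set.mem_singleton_iff] at hyS
        rcases hyS with rfl | rfl
        · exact absurd hs2 hyd
        · rfl
      · exact absurd (huniq y hyd hyS
          (hahr.trans (SimpleGraph.Adj.reachable (dv_adj.mpr ⟨hd, hahS, hyS⟩)))) hyah
    · by_cases hwS : w ∈ S
      · have hws : w = s := by
          rw [hSeq] at hwS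
          simp only [Set.mem_insert_iff, Set.mem_singleton_iff] at hwS
          rcases hwS with rfl | rfl
          · rfl
          · exact absurd hw2 hdm
        subst hws
        rcases hsnb y h2 with rfl | rfl
        · exact absurd rfl hyah
        · right; rfl
      · -- w is a degree-2 vertex of the component of a
        have hwr : (deleteVerts G S).Reachable a w :=
          hahr.trans (SimpleGraph.Adj.reachable (dv_adj.mpr ⟨h1, hahS, hwS⟩))
        obtain ⟨mw, hwmw, hmwah⟩ := deg2_other hw2 h1.symm
        have hdmw : G.degree mw ≠ 2 := fun h => hind w mw hw2 h hwmw
        have hmwS : mw ∈ S := by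
          by_contra hmwS
          exact hmwah (huniq mw hdmw hmwS
            (hwr.trans (SimpleGraph.Adj.reachable (dv_adj.mpr ⟨hwmw, hwS, hmwS⟩))))
        have hmwm : mw = m := by
          rw [hSeq] at hmwS
          simp only [Set.mem_insert_iff, Set.mem_singleton_iff] at hmwS
          rcases hmwS with rfl | rfl
          · exact absurd hs2 hdmw
          · rfl
        rcases deg2_mem hw2 h1.symm hwmw h2 (fun h => hmwah h.symm) with rfl | rfl
        · exact absurd rfl hyah
        · left; exact hmwm

lemma deg2_pair {V : Type*} [Fintype V] [DecidableEq V] {G : SimpleGraph V} [DecidableRel G.Adj]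
    {s x y : V} (hs : G.degree s = 2) (h : ∀ n, G.Adj s n → n = x ∨ n = y) (hxy : x ≠ y) :
    G.Adj s x ∧ G.Adj s y := by
  have hcard : (G.neighborFinset s).card = 2 := by
    rw [SimpleGraph.card_neighborFinset_eq_degree, hs]
  obtain ⟨n, hn⟩ := Finset.card_pos.mp (by rw [hcard]; norm_num)
  obtain ⟨m, hm, hmn⟩ := Finset.exists_mem_ne (s := G.neighborFinset s)
    (by rw [hcard]; norm_num) n
  rw [SimpleGraph.mem_neighborFinset] at hn hm
  rcases h n hn with rfl | rfl <;> rcases h m hm with rfl | rfl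
  · exact absurd rfl hmn
  · exact ⟨hn, hm⟩
  · exact ⟨hm, hn⟩
  · exact absurd rfl hmn

lemma lift_step {V : Type*} [Fintype V] [DecidableEq V] {G : SimpleGraph V} [DecidableRel G.Adj]
    (hind : ∀ u v : V, G.degree u = 2 → G.degree v = 2 → ¬ G.Adj u v)
    {S : Set V} {S' : Set {v : V // G.degree v ≠ 2}}
    (hP1 : ∀ s ∈ S, ∀ (h : G.degree s ≠ 2), (⟨s, h⟩ : {v : V // G.degree v ≠ 2}) ∈ S')
    (hP2 : ∀ s ∈ S, G.degree s = 2 → ∃ x ∈ S', G.Adj s x.1)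
    {u v : {v : V // G.degree v ≠ 2}} (h : (deleteVerts (suppressed G) S').Adj u v) :
    (deleteVerts G S).Reachable u.1 v.1 := by
  obtain ⟨hsadj, huS', hvS'⟩ := dv_adj.mp h
  obtain ⟨hne, hcase⟩ := supp_adj.mp hsadj
  have hnotS : ∀ x : {v : V // G.degree v ≠ 2}, x ∉ S' → x.1 ∉ S := by
    intro x hx hxS
    exact hx (by simpa using hP1 x.1 hxS x.2)
  have huS := hnotS u huS'
  have hvS := hnotS v hvS'
  have hne1 : u.1 ≠ v.1 := fun h' => hne (Subtype.ext h')
  rcases hcase with hd | ⟨w, hw2, h1, h2⟩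
  · exact (SimpleGraph.Adj.reachable (dv_adj.mpr ⟨hd, huS, hvS⟩))
  · have hwS : w ∉ S := by
      intro hwS
      obtain ⟨x, hxS', hxadj⟩ := hP2 w hwS hw2
      rcases deg2_mem hw2 h1.symm h2 hxadj hne1 with hx | hx
      · exact huS' (by rwa [show x = u from Subtype.ext hx] at hxS')
      · exact hvS' (by rwa [show x = v from Subtype.ext hx] at hxS')
    exact (SimpleGraph.Adj.reachable (dv_adj.mpr ⟨h1, huS, hwS⟩)).trans
      (SimpleGraph.Adj.reachable (dv_adj.mpr ⟨h2, hwS, hvS⟩))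

lemma lift {V : Type*} [Fintype V] [DecidableEq V] {G : SimpleGraph V} [DecidableRel G.Adj]
    (hind : ∀ u v : V, G.degree u = 2 → G.degree v = 2 → ¬ G.Adj u v)
    {S : Set V} {S' : Set {v : V // G.degree v ≠ 2}}
    (hP1 : ∀ s ∈ S, ∀ (h : G.degree s ≠ 2), (⟨s, h⟩ : {v : V // G.degree v ≠ 2}) ∈ S')
    (hP2 : ∀ s ∈ S, G.degree s = 2 → ∃ x ∈ S', G.Adj s x.1)
    {x y : {v : V // G.degree v ≠ 2}}
    (h : (deleteVerts (suppressed G) S').Reachable x y) :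
    (deleteVerts G S).Reachable x.1 y.1 := by
  obtain ⟨w⟩ := h
  induction w with
  | nil => exact SimpleGraph.Reachable.refl _
  | cons h p ih => exact (lift_step hind hP1 hP2 h).trans ih

/-- Let `G` be a 2-connected graph whose degree-2 vertices form an independent set, and
let `H` be obtained from `G` by suppressing all degree-2 vertices.  If `H` is a
(simple) 3-connected graph, then `G` is essentially 3-connected. -/
theorem stmt_6 {V : Type*} [Fintype V] [DecidableEq V] (G : SimpleGraph V)
    [DecidableRel G.Adj]
    (h2conn : TwoConnected G)
    (hind : ∀ u v : V, G.degree u = 2 → G.degree v = 2 → ¬ G.Adj u v)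
    (h3conn : ThreeConnected (suppressed G)) :
    EssentiallyThreeConnected G := by
  constructor
  · -- connectivity
    have hcard := h2conn.1
    have hnonempty : Nonempty V := by
      rw [← Fintype.card_pos_iff]; omega
    rw [SimpleGraph.connected_iff]
    refine ⟨fun x y => ?_, hnonempty⟩
    by_cases hxy : x = y
    · exact hxy ▸ SimpleGraph.Reachable.refl _
    · have : ∃ v : V, v ≠ x ∧ v ≠ y := by
        by_contra hv
        push_neg at hv
        have : (Finset.univ : Finset V) ⊆ {x, y} := by
          intro t _
          rcases Classical.em (t = x) with rfl | ht
          · simp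
          · simp [hv t ht]
        have := Finset.card_le_card this
        simp only [Finset.card_univ] at this
        have h2 : ({x, y} : Finset V).card ≤ 2 := Finset.card_insert_le _ _ |>.trans (by simp)
        omega
      obtain ⟨v, hvx, hvy⟩ := this
      exact (h2conn.2 v x y hvx.symm hvy.symm).mono (dv_le G {v})
  · intro S hS a a' b b' hnea hneb hra hrb
    by_contra hab
    set pA : V → Prop := fun x =>
      G.degree x ≠ 2 ∧ x ∉ S ∧ (deleteVerts G S).Reachable a x with hpA
    set pB : V → Prop := fun x =>
      G.degree x ≠ 2 ∧ x ∉ S ∧ (deleteVerts G S).Reachable b x with hpB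
    have hexA : ∃ x, pA x := by
      obtain ⟨z, hz, haS, hzS, har⟩ := first_edge hra hnea
      by_cases hda : G.degree a = 2
      · exact ⟨z, fun h => hind a z hda h hz, hzS, har⟩
      · exact ⟨a, hda, haS, SimpleGraph.Reachable.refl _⟩
    have hexB : ∃ x, pB x := by
      obtain ⟨z, hz, hbS, hzS, hbr⟩ := first_edge hrb hneb
      by_cases hdb : G.degree b = 2
      · exact ⟨z, fun h => hind b z hdb h hz, hzS, hbr⟩
      · exact ⟨b, hdb, hbS, SimpleGraph.Reachable.refl _⟩
    have hdisj : ∀ x, pA x → pB x → False := fun x hx hy =>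
      hab (hx.2.2.trans hy.2.2.symm)
    by_cases hsucc : ∃ ah, pA ah ∧ ∃ bh, pB bh ∧
        ∀ s, s ∈ S → G.degree s = 2 → ∃ n, G.Adj s n ∧ ¬(n = ah ∨ n = bh)
    · -- success: build S' and lift a path of the suppressed graph
      obtain ⟨ah, hah, bh, hbh, hsc⟩ := hsucc
      have hch : ∀ s, ∃ n, ((G.degree s = 2 ∧ s ∈ S) → (G.Adj s n ∧ ¬(n = ah ∨ n = bh))) ∧
          (¬(G.degree s = 2 ∧ s ∈ S) → n = s) := by
        intro s
        by_cases h : G.degree s = 2 ∧ s ∈ S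
        · obtain ⟨n, hn⟩ := hsc s h.2 h.1
          exact ⟨n, fun _ => hn, fun hc => absurd h hc⟩
        · exact ⟨s, fun hc => absurd hc h, fun _ => rfl⟩
      choose c hc1 hc2 using hch
      set S' : Set {v : V // G.degree v ≠ 2} := {x | ∃ s ∈ S, x.1 = c s} with hS'def
      have hS' : S'.ncard ≤ 2 := by
        have h1 : Subtype.val '' S' ⊆ c '' S := by
          rintro _ ⟨x, ⟨s, hs, hx⟩, rfl⟩
          exact ⟨s, hs, hx.symm⟩
        calc S'.ncard = (Subtype.val '' S').ncard :=
              (Set.ncard_image_of_injective _ Subtype.val_injective).symm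
          _ ≤ (c '' S).ncard := Set.ncard_le_ncard h1 (Set.toFinite _)
          _ ≤ S.ncard := Set.ncard_image_le (Set.toFinite _)
          _ ≤ 2 := hS
      have hP1 : ∀ s ∈ S, ∀ (h : G.degree s ≠ 2),
          (⟨s, h⟩ : {v : V // G.degree v ≠ 2}) ∈ S' :=
        fun s hs h => ⟨s, hs, (hc2 s (fun hc => h hc.1)).symm⟩
      have hP2 : ∀ s ∈ S, G.degree s = 2 → ∃ x ∈ S', G.Adj s x.1 := by
        intro s hs h2
        have hadj := (hc1 s ⟨h2, hs⟩).1
        have hdn : G.degree (c s) ≠ 2 := fun hd => hind s (c s) h2 hd hadj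
        exact ⟨⟨c s, hdn⟩, ⟨s, hs, rfl⟩, hadj⟩
      have hnotmem : ∀ (x : V) (hx : G.degree x ≠ 2), x ∉ S → ¬(x = ah ∨ x = bh) → False →
          True := fun _ _ _ _ _ => trivial
      have hxa : (⟨ah, hah.1⟩ : {v : V // G.degree v ≠ 2}) ∉ S' := by
        rintro ⟨s, hs, heq⟩
        by_cases h : G.degree s = 2 ∧ s ∈ S
        · exact (hc1 s h).2 (Or.inl heq.symm)
        · rw [hc2 s h] at heq
          exact hah.2.1 (show ah ∈ S by rw [show ah = s from heq]; exact hs)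
      have hxb : (⟨bh, hbh.1⟩ : {v : V // G.degree v ≠ 2}) ∉ S' := by
        rintro ⟨s, hs, heq⟩
        by_cases h : G.degree s = 2 ∧ s ∈ S
        · exact (hc1 s h).2 (Or.inr heq.symm)
        · rw [hc2 s h] at heq
          exact hbh.2.1 (show bh ∈ S by rw [show bh = s from heq]; exact hs)
      have hreach := lift hind hP1 hP2
        (h3conn.2 S' hS' ⟨ah, hah.1⟩ ⟨bh, hbh.1⟩ hxa hxb)
      exact hab ((hah.2.2.trans hreach).trans hbh.2.2.symm)
    · push_neg at hsucc
      have hF : ∀ ah, pA ah → ∀ bh, pB bh →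
          ∃ s ∈ S, G.degree s = 2 ∧ ∀ n, G.Adj s n → n = ah ∨ n = bh := by
        intro ah hA bh hB
        obtain ⟨s, hsS, hs⟩ := hsucc ah hA bh hB
        exact ⟨s, hsS, hs⟩
      by_cases hA1 : ∀ x y, pA x → pA y → x = y
      · obtain ⟨ah, hah⟩ := hexA
        obtain ⟨bh, hbh⟩ := hexB
        exact star_case hind h3conn hS hra hnea hah.1 hah.2.1 hah.2.2
          (fun x h1 h2 h3 => hA1 x ah ⟨h1, h2, h3⟩ hah) hbh.1
          (fun h => hdisj ah hah (h ▸ hbh)) (hF ah hah bh hbh)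
      · by_cases hB1 : ∀ x y, pB x → pB y → x = y
        · obtain ⟨ah, hah⟩ := hexA
          obtain ⟨bh, hbh⟩ := hexB
          obtain ⟨s, hsS, hs2, hnb⟩ := hF ah hah bh hbh
          exact star_case hind h3conn hS hrb hneb hbh.1 hbh.2.1 hbh.2.2
            (fun x h1 h2 h3 => hB1 x bh ⟨h1, h2, h3⟩ hbh) hah.1
            (fun h => hdisj ah hah (h.symm ▸ hbh))
            ⟨s, hsS, hs2, fun n hn => (hnb n hn).symm⟩
        · push_neg at hA1 hB1
          obtain ⟨a0, a1, ha0, ha1, ha01⟩ := hA1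
          obtain ⟨b0, b1, hb0, hb1, hb01⟩ := hB1
          have hne0 : a0 ≠ b0 := fun h => hdisj a0 ha0 (h ▸ hb0)
          have hne1 : a1 ≠ b0 := fun h => hdisj a1 ha1 (h ▸ hb0)
          have hne2 : a0 ≠ b1 := fun h => hdisj a0 ha0 (h ▸ hb1)
          obtain ⟨s, hsS, hs2, hsnb⟩ := hF a0 ha0 b0 hb0
          obtain ⟨s', hs'S, hs'2, hs'nb⟩ := hF a1 ha1 b0 hb0
          obtain ⟨s'', hs''S, hs''2, hs''nb⟩ := hF a0 ha0 b1 hb1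
          have hp := deg2_pair hs2 hsnb hne0
          have hp' := deg2_pair hs'2 hs'nb hne1
          have hp'' := deg2_pair hs''2 hs''nb hne2
          have hss' : s ≠ s' := by
            rintro rfl
            rcases hsnb a1 hp'.1 with h | h
            · exact ha01 h.symm
            · exact hne1 h
          have hss'' : s ≠ s'' := by
            rintro rfl
            rcases hsnb b1 hp''.2 with h | h
            · exact hne2 h.symm
            · exact hb01 h.symm
          have hs's'' : s' ≠ s'' := by
            rintro rfl
            rcases hs'nb a0 hp''.1 with h | h
            · exact ha01 h
            · exact hne0 h
          have hsub : ({s, s', s''} : Set V) ⊆ S := by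
            intro t ht
            simp only [Set.mem_insert_iff, Set.mem_singleton_iff] at ht
            rcases ht with rfl | rfl | rfl <;> assumption
          have h3 : ({s, s', s''} : Set V).ncard = 3 := by
            rw [Set.ncard_insert_of_notMem (by simp [hss', hss'']) (Set.toFinite _),
              Set.ncard_pair hs's'']
          have := Set.ncard_le_ncard hsub (Set.toFinite S)
          omega
end

section
/- Let G be an exceptional graph with root r, and let x, y be the two degree-2 vertices of G other than r. Then either (i) x and y are non-adjacent with the same neighborhood, and the set of lengths of x–y paths in G is, modulo 3, exactly {1, 2}; or (ii) x and y are adjacent, and the set of lengths of x–y paths in G is, modulo 3, exactly {0, 1}. -/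
/-!
Induction along the construction of exceptional graphs, keeping track of the whole set `L` of
lengths of paths between the two non-root degree-2 vertices. Every path between the new pair is
forced through the new vertices, so each step transforms `L` explicitly: adding a path of
length 3 gives `{1} ∪ (L + 2)`, adding a twin gives `L + 1`, adding the 4-cycle gives
`{2} ∪ (L + 4)`, and in `K_{2,3}` we have `L = {2, 4}`. Reducing modulo 3, `{1, 2}` becomes
`{0, 1}` and `{0, 1}` becomes `{1, 2}`.

For the twin step, if `N(x) = {y, a}` then the `x`–`a` paths `x y ⋯ a` correspond to the
`x`–`y` paths `x a ⋯ y`, so no path length other than those of `L` appears.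
-/

open SimpleGraph

/-- `ExcAux G r x y`: `G` is an exceptional graph with root `r`, whose two degree-2
vertices other than `r` are `x` and `y`.  Exceptional graphs are built recursively
from `K_{2,3}` (the root `r` being one of its three degree-2 vertices):
* if `x` and `y` are non-adjacent, one may add a new path of length 3 joining them;
* if `x` and `y` are adjacent, one may add a new vertex whose neighbourhood is that
  of `x` (or of `y`), or a new 4-cycle `a b c d a` together with the edges `x a`
  and `c y`.
Newly added vertices are required to be fresh, i.e. isolated beforehand. -/
inductive ExcAux {V : Type*} : SimpleGraph V → V → V → V → Prop
  | base (r x y a b : V) (hd : ([r, x, y, a, b] : List V).Pairwise (· ≠ ·)) :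
      ExcAux (SimpleGraph.fromEdgeSet
        {s(r, a), s(r, b), s(x, a), s(x, b), s(y, a), s(y, b)}) r x y
  | symm (G : SimpleGraph V) (r x y : V) : ExcAux G r x y → ExcAux G r y x
  | addPath (H : SimpleGraph V) (r x y p q : V) :
      ExcAux H r x y → ¬ H.Adj x y → p ≠ q →
      H.neighborSet p = ∅ → H.neighborSet q = ∅ →
      ExcAux (H ⊔ SimpleGraph.fromEdgeSet {s(x, p), s(p, q), s(q, y)}) r p q
  | addTwin (H : SimpleGraph V) (r x y w a : V) :
      ExcAux H r x y → H.Adj x y → H.neighborSet x = {y, a} →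
      H.neighborSet w = ∅ →
      ExcAux (H ⊔ SimpleGraph.fromEdgeSet {s(w, y), s(w, a)}) r x w
  | addSquare (H : SimpleGraph V) (r x y a b c d : V) :
      ExcAux H r x y → H.Adj x y →
      ([a, b, c, d] : List V).Pairwise (· ≠ ·) →
      H.neighborSet a = ∅ → H.neighborSet b = ∅ →
      H.neighborSet c = ∅ → H.neighborSet d = ∅ →
      ExcAux (H ⊔ SimpleGraph.fromEdgeSet
        {s(a, b), s(b, c), s(c, d), s(d, a), s(x, a), s(c, y)}) r b d

namespace SimpleGraph

variable {V : Type*} {G H : SimpleGraph V}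

def pathLengthsAvoiding (G : SimpleGraph V) (S : Set V) (u v : V) : Set ℕ :=
  {n | ∃ p : G.Walk u v, p.IsPath ∧ (∀ z ∈ p.support, z ∉ S) ∧ p.length = n}

abbrev pathLengths (G : SimpleGraph V) (u v : V) : Set ℕ := G.pathLengthsAvoiding ∅ u v

lemma Walk.notMem_support_of_isIsolated {u v z : V} (p : G.Walk u v) (huv : u ≠ v)
    (hz : G.IsIsolated z) : z ∉ p.support := by
  rw [p.mem_support_iff_exists_mem_edges_of_not_nil (Walk.not_nil_of_ne huv)]
  rintro ⟨e, he, hze⟩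
  obtain ⟨w, rfl⟩ := Sym2.mem_iff_exists.mp hze
  exact hz w (p.adj_of_mem_edges he)

section pathLengthsAvoiding

variable {S : Set V} {u v t : V} {n : ℕ}

lemma pathLengthsAvoiding_comm :
    G.pathLengthsAvoiding S u v = G.pathLengthsAvoiding S v u := by
  have key : ∀ {u v}, G.pathLengthsAvoiding S u v ⊆ G.pathLengthsAvoiding S v u := by
    rintro u v _ ⟨p, hp, hS, rfl⟩
    exact ⟨p.reverse, hp.reverse, by simpa using hS, p.length_reverse⟩
  exact key.antisymm key

lemma pathLengths_comm : G.pathLengths u v = G.pathLengths v u :=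
  pathLengthsAvoiding_comm

lemma eq_zero_of_mem_pathLengthsAvoiding_self (h : n ∈ G.pathLengthsAvoiding S u u) :
    n = 0 := by
  obtain ⟨p, hp, -, rfl⟩ := h
  exact (Walk.isPath_iff_nil.mp hp).length_eq_zero

lemma zero_mem_pathLengthsAvoiding_self (hu : u ∉ S) : 0 ∈ G.pathLengthsAvoiding S u u :=
  ⟨.nil, .nil, by simpa using hu, rfl⟩

lemma add_one_mem_pathLengthsAvoiding (huv : G.Adj u v) (hu : u ∉ S)
    (h : n ∈ G.pathLengthsAvoiding (insert u S) v t) :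
    n + 1 ∈ G.pathLengthsAvoiding S u t := by
  obtain ⟨p, hp, hS, rfl⟩ := h
  refine ⟨.cons huv p, hp.cons fun hu' => hS u hu' (Set.mem_insert u S), ?_, rfl⟩
  simp only [Walk.support_cons, List.mem_cons, forall_eq_or_imp]
  exact ⟨hu, fun z hz hzS => hS z hz (Set.mem_insert_of_mem u hzS)⟩

lemma exists_of_mem_pathLengthsAvoiding (h : n ∈ G.pathLengthsAvoiding S u t)
    (hut : u ≠ t) :
    ∃ v ∈ G.neighborSet u, v ∉ insert u S ∧
      ∃ m ∈ G.pathLengthsAvoiding (insert u S) v t, n = m + 1 := by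
  obtain ⟨p, hp, hS, rfl⟩ := h
  cases p with
  | nil => exact absurd rfl hut
  | cons huv p =>
    rw [Walk.cons_isPath_iff] at hp
    simp only [Walk.support_cons, List.mem_cons, forall_eq_or_imp] at hS
    have hpS : ∀ z ∈ p.support, z ∉ insert u S := fun z hz hzS =>
      hzS.elim (fun h => hp.2 (h ▸ hz)) (hS.2 z hz)
    exact ⟨_, huv, hpS _ p.start_mem_support, _, ⟨p, hp.1, hpS, rfl⟩, rfl⟩

lemma not_isIsolated_of_mem_pathLengthsAvoiding (h : n ∈ G.pathLengthsAvoiding S u v)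
    (huv : u ≠ v) : ¬ G.IsIsolated u := by
  obtain ⟨w, hw, -⟩ := exists_of_mem_pathLengthsAvoiding h huv
  exact Adj.not_isIsolated_left hw

lemma pathLengthsAvoiding_subset_pathLengths {F : Set V}
    (hGH : ∀ u v, G.Adj u v → u ∉ F → v ∉ F → H.Adj u v) (hF : F ⊆ S) :
    G.pathLengthsAvoiding S u v ⊆ H.pathLengths u v := by
  rintro _ ⟨p, hp, hS, rfl⟩
  have hE : ∀ e ∈ p.edges, e ∈ H.edgeSet := by
    intro e he
    induction e with
    | h a b =>
      exact hGH a b (p.adj_of_mem_edges he)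
        (fun ha => hS a (p.fst_mem_support_of_mem_edges he) (hF ha))
        (fun hb => hS b (p.snd_mem_support_of_mem_edges he) (hF hb))
  exact ⟨p.transfer H hE, hp.transfer hE, by simp, p.length_transfer hE⟩

lemma pathLengths_subset_pathLengthsAvoiding (hHG : H ≤ G) (hS : ∀ z ∈ S, H.IsIsolated z)
    (huv : u ≠ v) : H.pathLengths u v ⊆ G.pathLengthsAvoiding S u v := by
  rintro _ ⟨p, hp, -, rfl⟩
  refine ⟨p.mapLe hHG, hp.mapLe hHG, ?_, p.length_mapLe hHG⟩
  rw [Walk.support_mapLe_eq_support]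
  exact fun z hz hzS => p.notMem_support_of_isIsolated huv (hS z hzS) hz

end pathLengthsAvoiding

lemma adj_of_sup_fromEdgeSet_adj {E : Set (Sym2 V)} {F : Set V}
    (hE : ∀ e ∈ E, ∃ z ∈ F, z ∈ e) {u v : V} (h : (H ⊔ fromEdgeSet E).Adj u v) (hu : u ∉ F)
    (hv : v ∉ F) : H.Adj u v := by
  refine h.resolve_right fun ⟨huv, _⟩ => ?_
  obtain ⟨z, hz, hze⟩ := hE _ huv
  rcases Sym2.mem_iff.mp hze with rfl | rfl
  exacts [hu hz, hv hz]

lemma pathLengths_subset_of_neighborSet_eq_pair {x y a : V} (h : G.neighborSet x = {y, a}) :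
    G.pathLengths x a ⊆ G.pathLengths x y := by
  have hxy : G.Adj x y := by simp [← mem_neighborSet, h]
  have hxa : G.Adj x a := by simp [← mem_neighborSet, h]
  intro n hn
  obtain ⟨v, hv, -, m, hm, rfl⟩ := exists_of_mem_pathLengthsAvoiding hn hxa.ne
  rw [h] at hv
  rcases hv with rfl | rfl
  · rw [pathLengthsAvoiding_comm] at hm
    exact add_one_mem_pathLengthsAvoiding hxa (Set.notMem_empty x) hm
  · rw [eq_zero_of_mem_pathLengthsAvoiding_self hm]
    exact add_one_mem_pathLengthsAvoiding hxy (Set.notMem_empty x)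
      (zero_mem_pathLengthsAvoiding_self (by simpa using hxy.ne'))

lemma forall_exists_of_image_mod_pathLengths_eq_pair {x y : V} {m i j : ℕ}
    (h : (· % m) '' G.pathLengths x y = {i, j}) :
    (∀ p : G.Walk x y, p.IsPath → p.length % m = i ∨ p.length % m = j) ∧
      (∃ p : G.Walk x y, p.IsPath ∧ p.length % m = i) ∧
      (∃ p : G.Walk x y, p.IsPath ∧ p.length % m = j) := by
  have hmem {k : ℕ} : k ∈ ({i, j} : Set ℕ) ↔ ∃ p : G.Walk x y, p.IsPath ∧ p.length % m = k := by
    rw [← h]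
    constructor
    · rintro ⟨_, ⟨p, hp, -, rfl⟩, rfl⟩
      exact ⟨p, hp, rfl⟩
    · rintro ⟨p, hp, rfl⟩
      exact ⟨p.length, ⟨p, hp, by simp, rfl⟩, rfl⟩
  exact ⟨fun p hp => hmem.mpr ⟨p, hp, rfl⟩, hmem.mp (by simp), hmem.mp (by simp)⟩

end SimpleGraph

lemma Nat.image_mod_image_add (m k : ℕ) (S : Set ℕ) :
    (· % m) '' ((· + k) '' S) = (fun r => (r + k) % m) '' ((· % m) '' S) := by
  simp only [Set.image_image, Nat.mod_add_mod]

section Exceptional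

variable {V : Type*} {G H : SimpleGraph V}

def HasExcResidues (G : SimpleGraph V) (x y : V) : Prop :=
  (¬ G.Adj x y ∧ G.neighborSet x = G.neighborSet y ∧ (· % 3) '' G.pathLengths x y = {1, 2}) ∨
    (G.Adj x y ∧ (· % 3) '' G.pathLengths x y = {0, 1})

lemma HasExcResidues.symm {x y : V} (h : HasExcResidues G x y) : HasExcResidues G y x := by
  unfold HasExcResidues at h ⊢
  rw [pathLengths_comm, G.adj_comm]
  exact h.imp (fun h => ⟨h.1, h.2.1.symm, h.2.2⟩) id

lemma neighborSet_fromEdgeSet_K23 {r x y a b : V} (hd : [r, x, y, a, b].Pairwise (· ≠ ·)) :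
    let G := fromEdgeSet {s(r, a), s(r, b), s(x, a), s(x, b), s(y, a), s(y, b)}
    G.neighborSet x = {a, b} ∧ G.neighborSet y = {a, b} ∧ G.neighborSet a = {r, x, y} ∧
      G.neighborSet b = {r, x, y} ∧ G.neighborSet r = {a, b} := by
  obtain ⟨⟨hrx, hry, hra, hrb⟩, ⟨hxy, hxa, hxb⟩, ⟨hya, hyb⟩, hab⟩ :
      (r ≠ x ∧ r ≠ y ∧ r ≠ a ∧ r ≠ b) ∧ (x ≠ y ∧ x ≠ a ∧ x ≠ b) ∧ (y ≠ a ∧ y ≠ b) ∧ a ≠ b := by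
    simpa using hd
  refine ⟨?_, ?_, ?_, ?_, ?_⟩ <;>
  · ext w
    simp only [mem_neighborSet, fromEdgeSet_adj, Set.mem_insert_iff, Set.mem_singleton_iff,
      Sym2.eq_iff]
    grind

-- Such a path is `a y` or `a r b y`.
lemma length_of_mem_pathLengthsAvoiding_K23 {r x y a b : V}
    (ha : G.neighborSet a ⊆ {r, x, y}) (hr : G.neighborSet r ⊆ {a, b})
    (hb : G.neighborSet b ⊆ {r, x, y}) (hay : a ≠ y) (hry : r ≠ y) (hby : b ≠ y) {m : ℕ}
    (hm : m ∈ G.pathLengthsAvoiding {x} a y) : m = 1 ∨ m = 3 := by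
  obtain ⟨v₁, hv₁, hv₁S, m₁, hm₁, rfl⟩ := exists_of_mem_pathLengthsAvoiding hm hay
  rcases ha hv₁ with rfl | rfl | rfl
  · obtain ⟨v₂, hv₂, hv₂S, m₂, hm₂, rfl⟩ := exists_of_mem_pathLengthsAvoiding hm₁ hry
    rcases hr hv₂ with rfl | rfl
    · simp at hv₂S
    obtain ⟨v₃, hv₃, hv₃S, m₃, hm₃, rfl⟩ := exists_of_mem_pathLengthsAvoiding hm₂ hby
    rcases hb hv₃ with rfl | rfl | rfl
    · simp at hv₃S
    · simp at hv₃S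
    · simp [eq_zero_of_mem_pathLengthsAvoiding_self hm₃]
  · simp at hv₁S
  · simp [eq_zero_of_mem_pathLengthsAvoiding_self hm₁]

lemma pathLengths_K23 {r x y a b : V} (hd : [r, x, y, a, b].Pairwise (· ≠ ·)) :
    (fromEdgeSet {s(r, a), s(r, b), s(x, a), s(x, b), s(y, a), s(y, b)}).pathLengths x y =
      {2, 4} := by
  set G := fromEdgeSet {s(r, a), s(r, b), s(x, a), s(x, b), s(y, a), s(y, b)}
  obtain ⟨hNx, -, hNa, hNb, hNr⟩ : G.neighborSet x = {a, b} ∧ G.neighborSet y = {a, b} ∧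
      G.neighborSet a = {r, x, y} ∧ G.neighborSet b = {r, x, y} ∧ G.neighborSet r = {a, b} :=
    neighborSet_fromEdgeSet_K23 hd
  obtain ⟨⟨hrx, hry, hra, hrb⟩, ⟨hxy, hxa, hxb⟩, ⟨hya, hyb⟩, hab⟩ :
      (r ≠ x ∧ r ≠ y ∧ r ≠ a ∧ r ≠ b) ∧ (x ≠ y ∧ x ≠ a ∧ x ≠ b) ∧ (y ≠ a ∧ y ≠ b) ∧ a ≠ b := by
    simpa using hd
  apply subset_antisymm
  · intro n hn
    obtain ⟨v, hv, -, m, hm, rfl⟩ := exists_of_mem_pathLengthsAvoiding hn hxy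
    rw [LawfulSingleton.insert_empty_eq] at hm
    rw [hNx] at hv
    rcases hv with rfl | rfl
    · have := length_of_mem_pathLengthsAvoiding_K23 hNa.subset hNr.subset hNb.subset
        hya.symm hry hyb.symm hm
      grind
    · have := length_of_mem_pathLengthsAvoiding_K23 hNb.subset
        (hNr.trans (Set.pair_comm _ _)).subset hNa.subset hyb.symm hry hya.symm hm
      grind
  · have hGxa : G.Adj x a := by simp [← mem_neighborSet, hNx]
    have hGar : G.Adj a r := by simp [← mem_neighborSet, hNa]
    have hGay : G.Adj a y := by simp [← mem_neighborSet, hNa]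
    have hGby : G.Adj b y := by simp [← mem_neighborSet, hNb]
    have hGrb : G.Adj r b := by simp [← mem_neighborSet, hNr]
    have hxay : 2 ∈ G.pathLengths x y :=
      add_one_mem_pathLengthsAvoiding hGxa (Set.notMem_empty x) <|
        add_one_mem_pathLengthsAvoiding hGay (by grind) <|
          zero_mem_pathLengthsAvoiding_self (by grind)
    have hxarby : 4 ∈ G.pathLengths x y :=
      add_one_mem_pathLengthsAvoiding hGxa (Set.notMem_empty x) <|
        add_one_mem_pathLengthsAvoiding hGar (by grind) <|
          add_one_mem_pathLengthsAvoiding hGrb (by grind) <|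
            add_one_mem_pathLengthsAvoiding hGby (by grind) <|
              zero_mem_pathLengthsAvoiding_self (by grind)
    simp [Set.insert_subset_iff, hxay, hxarby]

lemma pathLengths_sup_fromEdgeSet_path {x y p q : V} (hpq : p ≠ q)
    (hp : H.IsIsolated p) (hq : H.IsIsolated q) (hxy : x ≠ y)
    (hx : ¬ H.IsIsolated x) (hy : ¬ H.IsIsolated y) :
    (H ⊔ fromEdgeSet {s(x, p), s(p, q), s(q, y)}).pathLengths p q =
      insert 1 ((· + 2) '' H.pathLengths x y) := by
  set G := H ⊔ fromEdgeSet {s(x, p), s(p, q), s(q, y)}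
  have hpx : p ≠ x := fun h => hx (h ▸ hp)
  have hpy : p ≠ y := fun h => hy (h ▸ hp)
  have hqx : q ≠ x := fun h => hx (h ▸ hq)
  have hqy : q ≠ y := fun h => hy (h ▸ hq)
  obtain ⟨hNp, hNq⟩ : G.neighborSet p = {x, q} ∧ G.neighborSet q = {p, y} := by
    simp only [G, neighborSet_sup, hp.neighborSet_eq_empty, hq.neighborSet_eq_empty,
      Set.empty_union]
    constructor <;>
    · ext w
      simp only [mem_neighborSet, fromEdgeSet_adj, Set.mem_insert_iff, Set.mem_singleton_iff,
        Sym2.eq_iff]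
      grind
  have hGH (u v : V) : G.Adj u v → u ∉ ({p, q} : Set V) → v ∉ ({p, q} : Set V) → H.Adj u v :=
    adj_of_sup_fromEdgeSet_adj (by simp)
  have hGpq : G.Adj p q := by simp [← mem_neighborSet, hNp]
  have hGpx : G.Adj p x := by simp [← mem_neighborSet, hNp]
  have hGqy : G.Adj q y := by simp [← mem_neighborSet, hNq]
  apply subset_antisymm
  · intro n hn
    obtain ⟨v, hv, -, m, hm, rfl⟩ := exists_of_mem_pathLengthsAvoiding hn hpq
    rw [hNp] at hv
    rcases hv with rfl | rfl
    · rw [pathLengthsAvoiding_comm] at hm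
      obtain ⟨w, hw, hwS, k, hk, rfl⟩ := exists_of_mem_pathLengthsAvoiding hm hqx
      rw [hNq] at hw
      rcases hw with rfl | rfl
      · simp at hwS
      · have hk' := pathLengthsAvoiding_subset_pathLengths hGH (by grind) hk
        rw [pathLengths_comm] at hk'
        exact Or.inr ⟨k, hk', rfl⟩
    · simp [eq_zero_of_mem_pathLengthsAvoiding_self hm]
  · rintro _ (rfl | ⟨k, hk, rfl⟩)
    · exact add_one_mem_pathLengthsAvoiding hGpq (Set.notMem_empty p)
        (zero_mem_pathLengthsAvoiding_self (by simpa using hpq.symm))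
    · rw [pathLengths_comm]
      refine add_one_mem_pathLengthsAvoiding hGqy (Set.notMem_empty q) ?_
      rw [pathLengthsAvoiding_comm]
      refine add_one_mem_pathLengthsAvoiding hGpx (by simpa using hpq) ?_
      exact pathLengths_subset_pathLengthsAvoiding le_sup_left (by simp [hp, hq]) hxy hk

lemma neighborSet_sup_fromEdgeSet_twin {x y w a : V}
    (hN : H.neighborSet x = {y, a}) (hw : H.IsIsolated w) :
    (H ⊔ fromEdgeSet {s(w, y), s(w, a)}).neighborSet x = {y, a} ∧
      (H ⊔ fromEdgeSet {s(w, y), s(w, a)}).neighborSet w = {y, a} := by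
  have hxy : H.Adj x y := by simp [← mem_neighborSet, hN]
  have hxa : H.Adj x a := by simp [← mem_neighborSet, hN]
  have hwx : w ≠ x := fun h => hxy.not_isIsolated_left (h ▸ hw)
  have hwy : w ≠ y := fun h => hxy.not_isIsolated_right (h ▸ hw)
  have hwa : w ≠ a := fun h => hxa.not_isIsolated_right (h ▸ hw)
  have hxy' := hxy.ne
  have hxa' := hxa.ne
  rw [neighborSet_sup, neighborSet_sup, hN, hw.neighborSet_eq_empty, Set.empty_union]
  constructor <;>
  · ext v
    simp only [Set.mem_union, mem_neighborSet, fromEdgeSet_adj, Set.mem_insert_iff,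
      Set.mem_singleton_iff, Sym2.eq_iff]
    grind

lemma pathLengths_sup_fromEdgeSet_twin {x y w a : V}
    (hN : H.neighborSet x = {y, a}) (hw : H.IsIsolated w) :
    (H ⊔ fromEdgeSet {s(w, y), s(w, a)}).pathLengths x w = (· + 1) '' H.pathLengths x y := by
  set G := H ⊔ fromEdgeSet {s(w, y), s(w, a)}
  have hNw : G.neighborSet w = {y, a} := (neighborSet_sup_fromEdgeSet_twin hN hw).2
  have hxy : H.Adj x y := by simp [← mem_neighborSet, hN]
  have hwx : w ≠ x := fun h => hxy.not_isIsolated_left (h ▸ hw)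
  have hGwy : G.Adj w y := by simp [← mem_neighborSet, hNw]
  have hGH (u v : V) : G.Adj u v → u ∉ ({w} : Set V) → v ∉ ({w} : Set V) → H.Adj u v :=
    adj_of_sup_fromEdgeSet_adj (by simp)
  rw [pathLengths_comm]
  apply subset_antisymm
  · intro n hn
    obtain ⟨v, hv, -, m, hm, rfl⟩ := exists_of_mem_pathLengthsAvoiding hn hwx
    have hm' := pathLengthsAvoiding_subset_pathLengths hGH (by simp) hm
    rw [pathLengths_comm] at hm'
    rw [hNw] at hv
    rcases hv with rfl | rfl
    · exact ⟨m, hm', rfl⟩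
    · exact ⟨m, pathLengths_subset_of_neighborSet_eq_pair hN hm', rfl⟩
  · rintro _ ⟨m, hm, rfl⟩
    refine add_one_mem_pathLengthsAvoiding hGwy (Set.notMem_empty w) ?_
    rw [pathLengthsAvoiding_comm]
    exact pathLengths_subset_pathLengthsAvoiding le_sup_left (by simp [hw]) hxy.ne hm

-- Such a path is `a d` or `a x ⋯ y c d`.
lemma length_of_mem_pathLengthsAvoiding_square {x y a b c d : V} {F : Set V}
    (ha : G.neighborSet a ⊆ {b, d, x}) (hd : G.neighborSet d ⊆ {a, c})
    (hc : G.neighborSet c ⊆ {b, d, y})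
    (hGH : ∀ u v, G.Adj u v → u ∉ F → v ∉ F → H.Adj u v) (hF : F ⊆ {a, b, c, d})
    (had : a ≠ d) (hxd : x ≠ d) (hxc : x ≠ c) {m : ℕ}
    (hm : m ∈ G.pathLengthsAvoiding {b} a d) :
    m = 1 ∨ ∃ k ∈ H.pathLengths x y, m = k + 3 := by
  obtain ⟨v₁, hv₁, hv₁S, m₁, hm₁, rfl⟩ := exists_of_mem_pathLengthsAvoiding hm had
  rcases ha hv₁ with rfl | rfl | rfl
  · simp at hv₁S
  · simp [eq_zero_of_mem_pathLengthsAvoiding_self hm₁]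
  rw [pathLengthsAvoiding_comm] at hm₁
  obtain ⟨v₂, hv₂, hv₂S, m₂, hm₂, rfl⟩ := exists_of_mem_pathLengthsAvoiding hm₁ hxd.symm
  rcases hd hv₂ with rfl | rfl
  · simp at hv₂S
  obtain ⟨v₃, hv₃, hv₃S, m₃, hm₃, rfl⟩ := exists_of_mem_pathLengthsAvoiding hm₂ hxc.symm
  rcases hc hv₃ with rfl | rfl | rfl
  · simp at hv₃S
  · simp at hv₃S
  have hm₃' := pathLengthsAvoiding_subset_pathLengths hGH (hF.trans (by grind)) hm₃
  exact Or.inr ⟨m₃, pathLengths_comm ▸ hm₃', rfl⟩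

lemma neighborSet_sup_fromEdgeSet_square {x y a b c d : V}
    (hxy : H.Adj x y) (hd : [a, b, c, d].Pairwise (· ≠ ·)) (ha : H.IsIsolated a)
    (hb : H.IsIsolated b) (hc : H.IsIsolated c) (hdd : H.IsIsolated d) :
    let G := H ⊔ fromEdgeSet {s(a, b), s(b, c), s(c, d), s(d, a), s(x, a), s(c, y)}
    G.neighborSet a = {b, d, x} ∧ G.neighborSet b = {a, c} ∧ G.neighborSet c = {b, d, y} ∧
      G.neighborSet d = {a, c} := by
  obtain ⟨⟨hab, hac, had⟩, ⟨hbc, hbd⟩, hcd⟩ :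
      (a ≠ b ∧ a ≠ c ∧ a ≠ d) ∧ (b ≠ c ∧ b ≠ d) ∧ c ≠ d := by simpa using hd
  have hfresh {z : V} (hz : H.IsIsolated z) : z ≠ x ∧ z ≠ y :=
    ⟨fun h => hxy.not_isIsolated_left (h ▸ hz), fun h => hxy.not_isIsolated_right (h ▸ hz)⟩
  have := hfresh ha; have := hfresh hb; have := hfresh hc; have := hfresh hdd
  simp only [neighborSet_sup, ha.neighborSet_eq_empty, hb.neighborSet_eq_empty,
    hc.neighborSet_eq_empty, hdd.neighborSet_eq_empty, Set.empty_union]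
  refine ⟨?_, ?_, ?_, ?_⟩ <;>
  · ext v
    simp only [mem_neighborSet, fromEdgeSet_adj, Set.mem_insert_iff, Set.mem_singleton_iff,
      Sym2.eq_iff]
    grind

lemma pathLengths_sup_fromEdgeSet_square {x y a b c d : V}
    (hxy : H.Adj x y) (hd : [a, b, c, d].Pairwise (· ≠ ·)) (ha : H.IsIsolated a)
    (hb : H.IsIsolated b) (hc : H.IsIsolated c) (hdd : H.IsIsolated d) :
    (H ⊔ fromEdgeSet {s(a, b), s(b, c), s(c, d), s(d, a), s(x, a), s(c, y)}).pathLengths b d =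
      insert 2 ((· + 4) '' H.pathLengths x y) := by
  set G := H ⊔ fromEdgeSet {s(a, b), s(b, c), s(c, d), s(d, a), s(x, a), s(c, y)}
  obtain ⟨hNa, hNb, hNc, hNd⟩ : G.neighborSet a = {b, d, x} ∧ G.neighborSet b = {a, c} ∧
      G.neighborSet c = {b, d, y} ∧ G.neighborSet d = {a, c} :=
    neighborSet_sup_fromEdgeSet_square hxy hd ha hb hc hdd
  obtain ⟨⟨hab, hac, had⟩, ⟨hbc, hbd⟩, hcd⟩ :
      (a ≠ b ∧ a ≠ c ∧ a ≠ d) ∧ (b ≠ c ∧ b ≠ d) ∧ c ≠ d := by simpa using hd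
  have hx {z : V} (hz : H.IsIsolated z) : x ≠ z := fun h => hxy.not_isIsolated_left (h ▸ hz)
  have hy {z : V} (hz : H.IsIsolated z) : y ≠ z := fun h => hxy.not_isIsolated_right (h ▸ hz)
  have hGH (u v : V) :
      G.Adj u v → u ∉ ({a, b, c, d} : Set V) → v ∉ ({a, b, c, d} : Set V) → H.Adj u v :=
    adj_of_sup_fromEdgeSet_adj (by simp)
  apply subset_antisymm
  · intro n hn
    obtain ⟨v, hv, -, m, hm, rfl⟩ := exists_of_mem_pathLengthsAvoiding hn hbd
    rw [LawfulSingleton.insert_empty_eq] at hm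
    rw [hNb] at hv
    rcases hv with rfl | rfl
    · rcases length_of_mem_pathLengthsAvoiding_square hNa.subset hNd.subset hNc.subset hGH
        subset_rfl had (hx hdd) (hx hc) hm with rfl | ⟨k, hk, rfl⟩
      · exact Or.inl rfl
      · exact Or.inr ⟨k, hk, rfl⟩
    · rcases length_of_mem_pathLengthsAvoiding_square hNc.subset
        (hNd.trans (Set.pair_comm _ _)).subset hNa.subset hGH (by grind) hcd (hy hdd)
        (hy ha) hm with rfl | ⟨k, hk, rfl⟩
      · exact Or.inl rfl
      · exact Or.inr ⟨k, pathLengths_comm ▸ hk, rfl⟩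
  · have hGab : G.Adj a b := by simp [← mem_neighborSet, hNa]
    have hGad : G.Adj a d := by simp [← mem_neighborSet, hNa]
    have hGax : G.Adj a x := by simp [← mem_neighborSet, hNa]
    have hGcd : G.Adj c d := by simp [← mem_neighborSet, hNc]
    have hGcy : G.Adj c y := by simp [← mem_neighborSet, hNc]
    rintro _ (rfl | ⟨k, hk, rfl⟩)
    · exact add_one_mem_pathLengthsAvoiding hGab.symm (Set.notMem_empty b) <|
        add_one_mem_pathLengthsAvoiding hGad (by simpa using hab) <|
          zero_mem_pathLengthsAvoiding_self (by simp [had.symm, hbd.symm])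
    · rw [pathLengths_comm]
      refine add_one_mem_pathLengthsAvoiding hGcd.symm (Set.notMem_empty d) <|
        add_one_mem_pathLengthsAvoiding hGcy (by simpa using hcd) ?_
      rw [pathLengthsAvoiding_comm]
      refine add_one_mem_pathLengthsAvoiding hGab.symm (by simp [hbc, hbd]) <|
        add_one_mem_pathLengthsAvoiding hGax (by simp [hab, hac, had]) ?_
      exact pathLengths_subset_pathLengthsAvoiding le_sup_left (by simp [ha, hb, hc, hdd])
        hxy.ne hk

lemma hasExcResidues_K23 {r x y a b : V} (hd : [r, x, y, a, b].Pairwise (· ≠ ·)) :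
    HasExcResidues (fromEdgeSet {s(r, a), s(r, b), s(x, a), s(x, b), s(y, a), s(y, b)})
      x y := by
  obtain ⟨hNx, hNy, -⟩ := neighborSet_fromEdgeSet_K23 hd
  obtain ⟨-, -, ⟨hya, hyb⟩, -⟩ :
      (r ≠ x ∧ r ≠ y ∧ r ≠ a ∧ r ≠ b) ∧ (x ≠ y ∧ x ≠ a ∧ x ≠ b) ∧ (y ≠ a ∧ y ≠ b) ∧ a ≠ b := by
    simpa using hd
  refine Or.inl ⟨?_, hNx.trans hNy.symm, ?_⟩
  · rw [← mem_neighborSet, hNx]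
    rintro (h | h)
    exacts [hya h, hyb h]
  · rw [pathLengths_K23 hd, Set.image_pair, Set.pair_comm]

lemma HasExcResidues.sup_fromEdgeSet_path {x y p q : V}
    (h : HasExcResidues H x y) (hxy : ¬ H.Adj x y) (hpq : p ≠ q) (hp : H.IsIsolated p)
    (hq : H.IsIsolated q) :
    HasExcResidues (H ⊔ fromEdgeSet {s(x, p), s(p, q), s(q, y)}) p q := by
  obtain ⟨-, -, hres⟩ := h.resolve_right fun h => hxy h.1
  obtain ⟨n, hn, hn1⟩ : 1 ∈ (· % 3) '' H.pathLengths x y := hres ▸ by simp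
  have hxy' : x ≠ y := by
    rintro rfl
    simp [eq_zero_of_mem_pathLengthsAvoiding_self hn] at hn1
  have hx := not_isIsolated_of_mem_pathLengthsAvoiding hn hxy'
  have hy := not_isIsolated_of_mem_pathLengthsAvoiding (pathLengths_comm ▸ hn) hxy'.symm
  refine Or.inr ⟨Or.inr ⟨by simp, hpq⟩, ?_⟩
  rw [pathLengths_sup_fromEdgeSet_path hpq hp hq hxy' hx hy, Set.image_insert_eq,
    Nat.image_mod_image_add, hres]
  simp [Set.image_pair]

lemma HasExcResidues.sup_fromEdgeSet_twin {x y w a : V}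
    (h : HasExcResidues H x y) (hN : H.neighborSet x = {y, a}) (hw : H.IsIsolated w) :
    HasExcResidues (H ⊔ fromEdgeSet {s(w, y), s(w, a)}) x w := by
  have hxy : H.Adj x y := by simp [← mem_neighborSet, hN]
  have hxa : H.Adj x a := by simp [← mem_neighborSet, hN]
  obtain ⟨-, hres⟩ := h.resolve_left fun h => h.1 hxy
  obtain ⟨hNx, hNw⟩ := neighborSet_sup_fromEdgeSet_twin hN hw
  refine Or.inl ⟨?_, hNx.trans hNw.symm, ?_⟩
  · rw [← mem_neighborSet, hNx]
    rintro (h | h)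
    · exact hxy.not_isIsolated_right (h ▸ hw)
    · exact hxa.not_isIsolated_right (h ▸ hw)
  · rw [pathLengths_sup_fromEdgeSet_twin hN hw, Nat.image_mod_image_add, hres]
    simp [Set.image_pair]

lemma HasExcResidues.sup_fromEdgeSet_square {x y a b c d : V}
    (h : HasExcResidues H x y) (hxy : H.Adj x y) (hd : [a, b, c, d].Pairwise (· ≠ ·))
    (ha : H.IsIsolated a) (hb : H.IsIsolated b) (hc : H.IsIsolated c) (hdd : H.IsIsolated d) :
    HasExcResidues
      (H ⊔ fromEdgeSet {s(a, b), s(b, c), s(c, d), s(d, a), s(x, a), s(c, y)}) b d := by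
  obtain ⟨-, hres⟩ := h.resolve_left fun h => h.1 hxy
  obtain ⟨-, hNb, -, hNd⟩ := neighborSet_sup_fromEdgeSet_square hxy hd ha hb hc hdd
  obtain ⟨⟨-, -, had⟩, -, hcd⟩ : (a ≠ b ∧ a ≠ c ∧ a ≠ d) ∧ (b ≠ c ∧ b ≠ d) ∧ c ≠ d := by
    simpa using hd
  refine Or.inl ⟨?_, hNb.trans hNd.symm, ?_⟩
  · rw [← mem_neighborSet, hNb]
    rintro (h | h)
    exacts [had h.symm, hcd h.symm]
  · rw [pathLengths_sup_fromEdgeSet_square hxy hd ha hb hc hdd, Set.image_insert_eq,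
      Nat.image_mod_image_add, hres]
    simp [Set.image_pair]

theorem ExcAux.hasExcResidues {r x y : V} (h : ExcAux G r x y) : HasExcResidues G x y := by
  induction h with
  | base _ _ _ _ _ hd => exact hasExcResidues_K23 hd
  | symm _ _ _ _ _ ih => exact ih.symm
  | addPath _ _ _ _ _ _ _ hxy hpq hp hq ih =>
    rw [neighborSet_eq_empty] at hp hq
    exact ih.sup_fromEdgeSet_path hxy hpq hp hq
  | addTwin _ _ _ _ _ _ _ _ hN hw ih =>
    rw [neighborSet_eq_empty] at hw
    exact ih.sup_fromEdgeSet_twin hN hw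
  | addSquare _ _ _ _ _ _ _ _ _ hxy hd ha hb hc hd' ih =>
    rw [neighborSet_eq_empty] at ha hb hc hd'
    exact ih.sup_fromEdgeSet_square hxy hd ha hb hc hd'

end Exceptional

/-- Let `G` be an exceptional graph with root `r` and further degree-2 vertices `x, y`.
Then either `x` and `y` are non-adjacent with the same neighbourhood and the set of
lengths of `x`–`y` paths in `G` is, modulo 3, exactly `{1, 2}`; or `x` and `y` are
adjacent and the set of lengths of `x`–`y` paths in `G` is, modulo 3, exactly `{0, 1}`. -/
theorem stmt_7 {V : Type*} (G : SimpleGraph V) (r x y : V)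
    (hG : ExcAux G r x y) :
    (¬ G.Adj x y ∧ G.neighborSet x = G.neighborSet y ∧
      (∀ p : G.Walk x y, p.IsPath → p.length % 3 = 1 ∨ p.length % 3 = 2) ∧
      (∃ p : G.Walk x y, p.IsPath ∧ p.length % 3 = 1) ∧
      (∃ p : G.Walk x y, p.IsPath ∧ p.length % 3 = 2)) ∨
    (G.Adj x y ∧
      (∀ p : G.Walk x y, p.IsPath → p.length % 3 = 0 ∨ p.length % 3 = 1) ∧
      (∃ p : G.Walk x y, p.IsPath ∧ p.length % 3 = 0) ∧
      (∃ p : G.Walk x y, p.IsPath ∧ p.length % 3 = 1)) := by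
  rcases hG.hasExcResidues with ⟨hxy, hN, hres⟩ | ⟨hxy, hres⟩
  · exact Or.inl ⟨hxy, hN, forall_exists_of_image_mod_pathLengths_eq_pair hres⟩
  · exact Or.inr ⟨hxy, forall_exists_of_image_mod_pathLengths_eq_pair hres⟩
end

section
/- Let G be a graph containing two vertex-disjoint odd cycles C_1, C_2 with lengths congruent modulo 4, and three pairwise vertex-disjoint paths P, Q, R each joining a vertex of C_1 to a vertex of C_2 with no interior vertex on C_1 ∪ C_2. Then the subgraph C_1 ∪ C_2 ∪ P ∪ Q ∪ R contains a cycle of length divisible by 4. -/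
/-!
Two of the three paths, say `S` and `T`, have lengths of equal parity. Their endpoints cut `C₁`
into two arcs of lengths `A + A' = |C₁|` and `C₂` into two arcs of lengths `B + B' = |C₂|`, and
any arc `X` of `C₁` and `Y` of `C₂` close `S` and `T` into a cycle of length `|S| + |T| + X + Y`.
The cycles for `(A, B), (A', B')` have total length `2(|S| + |T|) + |C₁| + |C₂| ≡ 2 (mod 4)`, and so
do those for `(A, B'), (A', B)`; one of these two pairs consists of even lengths, so one of its two
cycles has length divisible by 4.
-/

namespace SimpleGraph.Walk

variable {V : Type*} {G : SimpleGraph V}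

lemma IsPath.start_notMem_support_tail {u v : V} {p : G.Walk u v} (hp : p.IsPath) :
    u ∉ p.support.tail :=
  (List.nodup_cons.mp (p.cons_tail_support ▸ hp.support_nodup)).1

lemma IsPath.append_of_support_inter {u v w : V} {p : G.Walk u v} {q : G.Walk v w}
    (hp : p.IsPath) (hq : q.IsPath) (h : ∀ x ∈ p.support, x ∈ q.support → x = v) :
    (p.append q).IsPath := by
  rw [isPath_def, support_append]
  refine hp.support_nodup.append hq.support_nodup.tail fun x hxp hxq => ?_
  have hxv := h x hxp (List.mem_of_mem_tail hxq)
  exact hq.start_notMem_support_tail (hxv ▸ hxq)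

lemma IsPath.isCycle_append_reverse {u v : V} {p q : G.Walk u v} (hp : p.IsPath)
    (hq : q.IsPath) (h : ∀ x ∈ p.support, x ∈ q.support → x = u ∨ x = v)
    (hq_len : 1 < q.length) : (p.append q.reverse).IsCycle := by
  refine hp.isCycle_append hq.reverse (fun x hxp hxq => ?_) (by simpa using Or.inr hq_len)
  have hxq' : x ∈ q.support := by
    simpa using List.mem_of_mem_tail hxq
  rcases h x (List.mem_of_mem_tail hxp) hxq' with rfl | rfl
  · exact hp.start_notMem_support_tail hxp
  · exact hq.reverse.start_notMem_support_tail hxq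

lemma IsCycle.exists_isPath_length_add_eq [DecidableEq V] {v a b : V} {c : G.Walk v v}
    (hc : c.IsCycle) (ha : a ∈ c.support) (hb : b ∈ c.support) (hab : a ≠ b) :
    ∃ α β : G.Walk a b, α.length + β.length = c.length ∧
      (α.IsPath ∧ α.support ⊆ c.support ∧ α.edges ⊆ c.edges) ∧
      (β.IsPath ∧ β.support ⊆ c.support ∧ β.edges ⊆ c.edges) := by
  set c' := c.rotate a ha
  have hb' : b ∈ c'.support := (c.mem_support_rotate_iff a ha).mpr hb
  have hc' : (c'.takeUntil b hb' |>.append (c'.dropUntil b hb')).IsCycle := by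
    rw [take_spec]
    exact hc.rotate ha
  have hsupport {w : V} (hw : w ∈ c'.support) : w ∈ c.support :=
    (c.mem_support_rotate_iff a ha).mp hw
  have hedges {e : Sym2 V} (he : e ∈ c'.edges) : e ∈ c.edges :=
    (c.rotate_edges a ha).perm.mem_iff.mp he
  refine ⟨c'.takeUntil b hb', (c'.dropUntil b hb').reverse, ?_,
    ⟨hc'.isPath_of_append_left (not_nil_of_ne hab.symm), fun w hw => ?_, fun e he => ?_⟩,
    ⟨(hc'.isPath_of_append_right (not_nil_of_ne hab)).reverse, fun w hw => ?_, fun e he => ?_⟩⟩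
  · rw [length_reverse, ← length_append, take_spec, length_rotate]
  · exact hsupport (c'.support_takeUntil_subset_support hb' hw)
  · exact hedges (c'.edges_takeUntil_subset_edges hb' he)
  · rw [support_reverse, List.mem_reverse] at hw
    exact hsupport (c'.support_dropUntil_subset_support hb' hw)
  · rw [edges_reverse, List.mem_reverse] at he
    exact hedges (c'.edges_dropUntil_subset_edges hb' he)

section Linking

variable {A B : Set V} {u v : V} {p : G.Walk u v}

lemma eq_start_of_mem_of_interior_notMem (hAB : Disjoint A B) (hv : v ∈ B)
    (hint : ∀ x ∈ p.support, x ≠ u → x ≠ v → x ∉ A ∧ x ∉ B) :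
    ∀ x ∈ p.support, x ∈ A → x = u := by
  intro x hx hxA
  by_contra hxu
  exact (hint x hx hxu (hAB.ne_of_mem hxA hv)).1 hxA

lemma eq_end_of_mem_of_interior_notMem (hAB : Disjoint A B) (hu : u ∈ A)
    (hint : ∀ x ∈ p.support, x ≠ u → x ≠ v → x ∉ A ∧ x ∉ B) :
    ∀ x ∈ p.support, x ∈ B → x = v := by
  intro x hx hxB
  by_contra hxv
  exact (hint x hx (hAB.ne_of_mem hu hxB).symm hxv).2 hxB

lemma isCycle_of_linking_paths (hAB : Disjoint A B) {u₁ w₁ u₂ w₂ : V}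
    {α : G.Walk u₁ w₁} {β : G.Walk u₂ w₂} {S : G.Walk u₁ u₂} {T : G.Walk w₁ w₂}
    (hα : α.IsPath) (hβ : β.IsPath) (hS : S.IsPath) (hT : T.IsPath)
    (hαA : ∀ x ∈ α.support, x ∈ A) (hβB : ∀ x ∈ β.support, x ∈ B)
    (hSint : ∀ x ∈ S.support, x ≠ u₁ → x ≠ u₂ → x ∉ A ∧ x ∉ B)
    (hTint : ∀ x ∈ T.support, x ≠ w₁ → x ≠ w₂ → x ∉ A ∧ x ∉ B)
    (hST : ∀ x ∈ S.support, x ∉ T.support) :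
    (α.append (S.append (β.append T.reverse)).reverse).IsCycle := by
  have hu₁ : u₁ ∈ A := hαA _ α.start_mem_support
  have hw₁ : w₁ ∈ A := hαA _ α.end_mem_support
  have hu₂ : u₂ ∈ B := hβB _ β.start_mem_support
  have hw₂ : w₂ ∈ B := hβB _ β.end_mem_support
  have hSA := eq_start_of_mem_of_interior_notMem hAB hu₂ hSint
  have hSB := eq_end_of_mem_of_interior_notMem hAB hu₁ hSint
  have hTA := eq_start_of_mem_of_interior_notMem hAB hw₂ hTint
  have hTB := eq_end_of_mem_of_interior_notMem hAB hw₁ hTint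
  have hβT : (β.append T.reverse).IsPath :=
    hβ.append_of_support_inter hT.reverse fun x hxβ hxT => hTB x (by simpa using hxT) (hβB x hxβ)
  have hW : (S.append (β.append T.reverse)).IsPath := by
    refine hS.append_of_support_inter hβT fun x hxS hx => ?_
    rw [mem_support_append_iff, support_reverse, List.mem_reverse] at hx
    rcases hx with hxβ | hxT
    · exact hSB x hxS (hβB x hxβ)
    · exact absurd hxT (hST x hxS)
  refine hα.isCycle_append_reverse hW (fun x hxα hxW => ?_) ?_
  · have hxA := hαA x hxα
    rw [mem_support_append_iff, mem_support_append_iff, support_reverse, List.mem_reverse] at hxW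
    rcases hxW with hxS | hxβ | hxT
    · exact .inl (hSA x hxS hxA)
    · exact absurd (hβB x hxβ) (Set.disjoint_left.mp hAB hxA)
    · exact .inr (hTA x hxT hxA)
  · have hS_pos : 0 < S.length := (not_nil_iff_lt_length).mp (not_nil_of_ne (hAB.ne_of_mem hu₁ hu₂))
    have hT_pos : 0 < T.length := (not_nil_iff_lt_length).mp (not_nil_of_ne (hAB.ne_of_mem hw₁ hw₂))
    simp only [length_append, length_reverse]
    omega

end Linking

end SimpleGraph.Walk

open SimpleGraph Walk

lemma four_dvd_of_odd_of_mod_four_eq {b A A' B B' l l' : ℕ} (hb : Even b) (hl : Odd l)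
    (hA : A + A' = l) (hB : B + B' = l') (hmod : l % 4 = l' % 4) :
    4 ∣ b + A + B ∨ 4 ∣ b + A + B' ∨ 4 ∣ b + A' + B ∨ 4 ∣ b + A' + B' := by
  rw [Nat.even_iff] at hb
  rw [Nat.odd_iff] at hl
  omega

theorem exists_isCycle_four_dvd_length_of_even {V : Type*} {G : SimpleGraph V}
    {v₁ v₂ u₁ u₂ w₁ w₂ : V} {C₁ : G.Walk v₁ v₁} {C₂ : G.Walk v₂ v₂}
    (hC₁ : C₁.IsCycle) (hC₂ : C₂.IsCycle) (hodd : Odd C₁.length)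
    (hmod : C₁.length % 4 = C₂.length % 4) (hdisj : ∀ x ∈ C₁.support, x ∉ C₂.support)
    {S : G.Walk u₁ u₂} {T : G.Walk w₁ w₂} (hS : S.IsPath) (hT : T.IsPath)
    (hu₁ : u₁ ∈ C₁.support) (hu₂ : u₂ ∈ C₂.support)
    (hw₁ : w₁ ∈ C₁.support) (hw₂ : w₂ ∈ C₂.support)
    (hSint : ∀ x ∈ S.support, x ≠ u₁ → x ≠ u₂ → x ∉ C₁.support ∧ x ∉ C₂.support)
    (hTint : ∀ x ∈ T.support, x ≠ w₁ → x ≠ w₂ → x ∉ C₁.support ∧ x ∉ C₂.support)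
    (hST : ∀ x ∈ S.support, x ∉ T.support) (heven : Even (S.length + T.length)) :
    ∃ (w : V) (c : G.Walk w w), c.IsCycle ∧ 4 ∣ c.length ∧
      ∀ e ∈ c.edges, e ∈ C₁.edges ∨ e ∈ C₂.edges ∨ e ∈ S.edges ∨ e ∈ T.edges := by
  classical
  have hAB : Disjoint {x | x ∈ C₁.support} {x | x ∈ C₂.support} := Set.disjoint_left.mpr hdisj
  have hu₁w₁ : u₁ ≠ w₁ := fun h => hST u₁ S.start_mem_support (h ▸ T.start_mem_support)
  have hu₂w₂ : u₂ ≠ w₂ := fun h => hST u₂ S.end_mem_support (h ▸ T.end_mem_support)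
  obtain ⟨α₁, α₂, hα, hα₁, hα₂⟩ := hC₁.exists_isPath_length_add_eq hu₁ hw₁ hu₁w₁
  obtain ⟨β₁, β₂, hβ, hβ₁, hβ₂⟩ := hC₂.exists_isPath_length_add_eq hu₂ hw₂ hu₂w₂
  have cycle (α : G.Walk u₁ w₁) (β : G.Walk u₂ w₂)
      (hα : α.IsPath ∧ α.support ⊆ C₁.support ∧ α.edges ⊆ C₁.edges)
      (hβ : β.IsPath ∧ β.support ⊆ C₂.support ∧ β.edges ⊆ C₂.edges)
      (h4 : 4 ∣ S.length + T.length + α.length + β.length) :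
      ∃ (w : V) (c : G.Walk w w), c.IsCycle ∧ 4 ∣ c.length ∧
        ∀ e ∈ c.edges, e ∈ C₁.edges ∨ e ∈ C₂.edges ∨ e ∈ S.edges ∨ e ∈ T.edges := by
    refine ⟨u₁, _, isCycle_of_linking_paths hAB hα.1 hβ.1 hS hT (fun x hx => hα.2.1 hx)
      (fun x hx => hβ.2.1 hx) hSint hTint hST, ?_, fun e he => ?_⟩
    · simp only [length_append, length_reverse]
      convert h4 using 1
      ring
    · simp only [edges_append, edges_reverse, List.mem_append, List.mem_reverse] at he
      rcases he with he | he | he | he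
      · exact .inl (hα.2.2 he)
      · exact .inr (.inr (.inl he))
      · exact .inr (.inl (hβ.2.2 he))
      · exact .inr (.inr (.inr he))
  rcases four_dvd_of_odd_of_mod_four_eq heven hodd hα hβ hmod with h4 | h4 | h4 | h4
  exacts [cycle α₁ β₁ hα₁ hβ₁ h4, cycle α₁ β₂ hα₁ hβ₂ h4, cycle α₂ β₁ hα₂ hβ₁ h4,
    cycle α₂ β₂ hα₂ hβ₂ h4]

theorem stmt_13_general {V : Type*} (G : SimpleGraph V) (v₁ v₂ : V)
    (C₁ : G.Walk v₁ v₁) (C₂ : G.Walk v₂ v₂)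
    (hC₁ : C₁.IsCycle) (hC₂ : C₂.IsCycle)
    (hodd₁ : Odd C₁.length)
    (hmod : C₁.length % 4 = C₂.length % 4)
    (hdisj : ∀ u, u ∈ C₁.support → u ∉ C₂.support)
    (a₁ a₂ b₁ b₂ c₁ c₂ : V)
    (P : G.Walk a₁ a₂) (Q : G.Walk b₁ b₂) (R : G.Walk c₁ c₂)
    (hP : P.IsPath) (hQ : Q.IsPath) (hR : R.IsPath)
    (ha₁ : a₁ ∈ C₁.support) (ha₂ : a₂ ∈ C₂.support)
    (hb₁ : b₁ ∈ C₁.support) (hb₂ : b₂ ∈ C₂.support)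
    (hc₁ : c₁ ∈ C₁.support) (hc₂ : c₂ ∈ C₂.support)
    (hPint : ∀ u ∈ P.support, u ≠ a₁ → u ≠ a₂ →
      u ∉ C₁.support ∧ u ∉ C₂.support)
    (hQint : ∀ u ∈ Q.support, u ≠ b₁ → u ≠ b₂ →
      u ∉ C₁.support ∧ u ∉ C₂.support)
    (hRint : ∀ u ∈ R.support, u ≠ c₁ → u ≠ c₂ →
      u ∉ C₁.support ∧ u ∉ C₂.support)
    (hPQ : ∀ u, u ∈ P.support → u ∉ Q.support)
    (hPR : ∀ u, u ∈ P.support → u ∉ R.support)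
    (hQR : ∀ u, u ∈ Q.support → u ∉ R.support) :
    ∃ (w : V) (c : G.Walk w w), c.IsCycle ∧ 4 ∣ c.length ∧
      ∀ e ∈ c.edges, e ∈ C₁.edges ∨ e ∈ C₂.edges ∨
        e ∈ P.edges ∨ e ∈ Q.edges ∨ e ∈ R.edges := by
  have hpair : Even (P.length + Q.length) ∨ Even (P.length + R.length) ∨
      Even (Q.length + R.length) := by
    simp only [Nat.even_iff]
    omega
  rcases hpair with h | h | h
  · obtain ⟨w, c, hc, h4, hE⟩ := exists_isCycle_four_dvd_length_of_even hC₁ hC₂ hodd₁ hmod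
      hdisj hP hQ ha₁ ha₂ hb₁ hb₂ hPint hQint hPQ h
    exact ⟨w, c, hc, h4, fun e he => by grind⟩
  · obtain ⟨w, c, hc, h4, hE⟩ := exists_isCycle_four_dvd_length_of_even hC₁ hC₂ hodd₁ hmod
      hdisj hP hR ha₁ ha₂ hc₁ hc₂ hPint hRint hPR h
    exact ⟨w, c, hc, h4, fun e he => by grind⟩
  · obtain ⟨w, c, hc, h4, hE⟩ := exists_isCycle_four_dvd_length_of_even hC₁ hC₂ hodd₁ hmod
      hdisj hQ hR hb₁ hb₂ hc₁ hc₂ hQint hRint hQR h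
    exact ⟨w, c, hc, h4, fun e he => by grind⟩

/-- Let `G` contain two vertex-disjoint odd cycles `C₁`, `C₂` whose lengths are
congruent modulo 4, together with three pairwise vertex-disjoint paths `P`, `Q`, `R`,
each joining a vertex of `C₁` to a vertex of `C₂` with no interior vertex on
`C₁ ∪ C₂`.  Then the subgraph `C₁ ∪ C₂ ∪ P ∪ Q ∪ R` contains a cycle of length
divisible by 4. -/
theorem stmt_13 {V : Type*} (G : SimpleGraph V) (v₁ v₂ : V)
    (C₁ : G.Walk v₁ v₁) (C₂ : G.Walk v₂ v₂)
    (hC₁ : C₁.IsCycle) (hC₂ : C₂.IsCycle)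
    (hodd₁ : Odd C₁.length) (hodd₂ : Odd C₂.length)
    (hmod : C₁.length % 4 = C₂.length % 4)
    (hdisj : ∀ u, u ∈ C₁.support → u ∉ C₂.support)
    (a₁ a₂ b₁ b₂ c₁ c₂ : V)
    (P : G.Walk a₁ a₂) (Q : G.Walk b₁ b₂) (R : G.Walk c₁ c₂)
    (hP : P.IsPath) (hQ : Q.IsPath) (hR : R.IsPath)
    (ha₁ : a₁ ∈ C₁.support) (ha₂ : a₂ ∈ C₂.support)
    (hb₁ : b₁ ∈ C₁.support) (hb₂ : b₂ ∈ C₂.support)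
    (hc₁ : c₁ ∈ C₁.support) (hc₂ : c₂ ∈ C₂.support)
    (hPint : ∀ u ∈ P.support, u ≠ a₁ → u ≠ a₂ →
      u ∉ C₁.support ∧ u ∉ C₂.support)
    (hQint : ∀ u ∈ Q.support, u ≠ b₁ → u ≠ b₂ →
      u ∉ C₁.support ∧ u ∉ C₂.support)
    (hRint : ∀ u ∈ R.support, u ≠ c₁ → u ≠ c₂ →
      u ∉ C₁.support ∧ u ∉ C₂.support)
    (hPQ : ∀ u, u ∈ P.support → u ∉ Q.support)
    (hPR : ∀ u, u ∈ P.support → u ∉ R.support)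
    (hQR : ∀ u, u ∈ Q.support → u ∉ R.support) :
    ∃ (w : V) (c : G.Walk w w), c.IsCycle ∧ 4 ∣ c.length ∧
      ∀ e ∈ c.edges, e ∈ C₁.edges ∨ e ∈ C₂.edges ∨
        e ∈ P.edges ∨ e ∈ Q.edges ∨ e ∈ R.edges :=
  stmt_13_general G v₁ v₂ C₁ C₂ hC₁ hC₂ hodd₁ hmod hdisj a₁ a₂ b₁ b₂ c₁ c₂ P Q R hP hQ hR ha₁ ha₂
    hb₁ hb₂ hc₁ hc₂ hPint hQint hRint hPQ hPR hQR
end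

section
/- Let G be a connected plane graph with n vertices in which every vertex has degree 2 or 3 and there are exactly three vertices of degree 2, with at most one 3-face, no 4-face, and at most two 5-faces (all other faces having length at least 6, and all face boundaries being cycles). Then the face-length count leads to a contradiction: e(G) = (3n−3)/2 together with Euler's formula forces 6 ≤ 3f_3 + f_5 ≤ 5, which is impossible. Hence no such plane graph exists. -/
lemma swap_sum {α β : Type*} [DecidableEq β] (l : List α) (s : Finset β) (p : β → α → Bool) :
    ∑ e ∈ s, l.countP (p e) = (l.map fun f => (s.filter fun e => p e f).card).sum := by
  induction l with
  | nil => simp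
  | cons a l ih =>
    simp only [List.countP_cons, List.map_cons, List.sum_cons, Finset.sum_add_distrib, ih,
      Finset.card_filter]
    ring

lemma sum_lb (l : List ℕ) (h : ∀ x ∈ l, x = 3 ∨ x = 5 ∨ 6 ≤ x) :
    6 * l.length ≤ l.sum + 3 * l.countP (· = 3) + l.countP (· = 5) := by
  induction l with
  | nil => simp
  | cons a l ih =>
    have ha := h a (by simp)
    have := ih (fun x hx => h x (by simp [hx]))
    simp only [List.length_cons, List.sum_cons, List.countP_cons]
    rcases ha with h1 | h1 | h1 <;> simp [h1] <;> omega



/-- A combinatorial plane embedding of `G`, recorded through its list of face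
boundaries: every face boundary is a cycle, every edge of `G` lies on exactly two
faces, and Euler's formula `n - e + f = 2` holds. -/
structure PlaneFaces {V : Type*} [Fintype V] [DecidableEq V] (G : SimpleGraph V)
    [DecidableRel G.Adj] where
  /-- the boundary cycles of the faces -/
  faces : List (Σ' v : V, G.Walk v v)
  isCycle : ∀ f ∈ faces, f.2.IsCycle
  edgeTwice : ∀ e ∈ G.edgeSet,
    (faces.countP fun f => decide (e ∈ f.2.edges)) = 2
  euler : Fintype.card V + faces.length = G.edgeFinset.card + 2

/-- There is no connected plane graph in which every vertex has degree 2 or 3 with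
exactly three vertices of degree 2, having at most one 3-face, no 4-face, at most two
5-faces, and all other faces of length at least 6: Euler's formula yields
`6 ≤ 3 f₃ + f₅ ≤ 5`, a contradiction. -/
theorem stmt_18 {V : Type*} [Fintype V] [DecidableEq V] (G : SimpleGraph V)
    [DecidableRel G.Adj]
    (hconn : G.Connected) (F : PlaneFaces G)
    (hdeg : ∀ v, G.degree v = 2 ∨ G.degree v = 3)
    (h2 : (Finset.univ.filter fun v => G.degree v = 2).card = 3)
    (hf3 : (F.faces.countP fun f => decide (f.2.length = 3)) ≤ 1)
    (hf4 : (F.faces.countP fun f => decide (f.2.length = 4)) = 0)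
    (hf5 : (F.faces.countP fun f => decide (f.2.length = 5)) ≤ 2)
    (hbig : ∀ f ∈ F.faces, f.2.length = 3 ∨ f.2.length = 5 ∨ 6 ≤ f.2.length) :
    False := by
  classical
  set n := Fintype.card V with hn
  set E := G.edgeFinset with hE
  -- degree sum: 2e + 3 = 3n
  have hdegsum : ∑ v, G.degree v = 2 * E.card := G.sum_degrees_eq_twice_card_edges
  have hkey : 2 * E.card + 3 = 3 * n := by
    have hsum : ∑ v : V, (G.degree v + (if G.degree v = 2 then 1 else 0)) = ∑ _v : V, 3 := by
      apply Finset.sum_congr rfl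
      intro v _
      rcases hdeg v with h | h <;> simp [h]
    rw [Finset.sum_add_distrib, hdegsum, ← Finset.card_filter] at hsum
    simp only [Finset.sum_const, smul_eq_mul, mul_one] at hsum
    rw [h2] at hsum
    simpa [mul_comm] using hsum
  -- face length sum = 2e
  have hlen : (F.faces.map fun f => f.2.length).sum = 2 * E.card := by
    have hswap := swap_sum F.faces E (fun e f => decide (e ∈ f.2.edges))
    have h1 : ∑ e ∈ E, F.faces.countP (fun f => decide (e ∈ f.2.edges)) = 2 * E.card := by
      rw [Finset.sum_congr rfl
        (fun e he => F.edgeTwice e ((SimpleGraph.mem_edgeFinset).mp he))]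
      rw [Finset.sum_const, smul_eq_mul, mul_comm]
    rw [h1] at hswap
    rw [hswap]
    congr 1
    apply List.map_congr_left
    intro f hf
    have hnodup : f.2.edges.Nodup := (F.isCycle f hf).edges_nodup
    have hfilter : (E.filter fun e => decide (e ∈ f.2.edges)) = f.2.edges.toFinset := by
      ext e
      simp only [Finset.mem_filter, List.mem_toFinset, decide_eq_true_eq, hE,
        SimpleGraph.mem_edgeFinset]
      exact ⟨fun h => h.2, fun h => ⟨f.2.edges_subset_edgeSet h, h⟩⟩
    rw [hfilter, List.toFinset_card_of_nodup hnodup, SimpleGraph.Walk.length_edges]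
  -- lower bound on sum of lengths
  set L := F.faces.map fun f => f.2.length with hL
  have hlb := sum_lb L (by
    intro x hx
    obtain ⟨f, hf, rfl⟩ := List.mem_map.mp hx
    exact hbig f hf)
  have hL3 : L.countP (· = 3) = F.faces.countP fun f => decide (f.2.length = 3) := by
    rw [hL, List.countP_map]; rfl
  have hL5 : L.countP (· = 5) = F.faces.countP fun f => decide (f.2.length = 5) := by
    rw [hL, List.countP_map]; rfl
  have hLlen : L.length = F.faces.length := by rw [hL, List.length_map]
  have heuler := F.euler
  rw [hlen] at hlb
  rw [← hL3] at hf3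
  rw [← hL5] at hf5
  rw [← hLlen] at heuler
  simp only [hn, hE] at *
  omega
end
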